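/- Let J be a nonempty finite set of targets, and let Dp, Du : J → ℝ satisfy Dp(j) ≥ Du(j) for all j ∈ J. Let q : J → ℝ satisfy q_j ∈ {0,1} for all j and Σ_{j∈J} q_j = 1. Then for every j ∈ J, Σ_{j'∈J, j'≠j} (Dp(j') − Du(j)) · q_{j'} ≤ (max_{l∈J} max(Dp(l), Du(l)) − min(Dp(j), Du(j))) · (1 − q_j). -/

import Mathlib

open Finset

theorem sum_mul_le_mul_sum_of_le {ι R : Type*} [Semiring R] [PartialOrder R] [IsOrderedRing R]
    {s : Finset ι} {a w : ι → R} {c : R} (ha : ∀ i ∈ s, a i ≤ c) (hw : ∀ i ∈ s, 0 ≤ w i) :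
    ∑ i ∈ s, a i * w i ≤ c * ∑ i ∈ s, w i := by
  rw [mul_sum]
  exact sum_le_sum fun i hi => mul_le_mul_of_nonneg_right (ha i hi) (hw i hi)

theorem sum_filter_ne_eq_sub {ι M : Type*} [Fintype ι] [DecidableEq ι] [AddCommGroup M]
    (f : ι → M) (j : ι) : ∑ i ∈ univ.filter (fun i => i ≠ j), f i = ∑ i, f i - f j := by
  rw [filter_ne', sum_erase_eq_sub (mem_univ j)]

theorem stmt_7_general {J : Type*} [Fintype J] [DecidableEq J] [Nonempty J]
    (Dp Du : J → ℝ)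
    (q : J → ℝ) (hq01 : ∀ j, q j = 0 ∨ q j = 1) (hq1 : ∑ j, q j = 1) :
    ∀ j, ∑ j' ∈ Finset.univ.filter (fun j' => j' ≠ j), (Dp j' - Du j) * q j'
      ≤ (Finset.univ.sup' Finset.univ_nonempty (fun l => max (Dp l) (Du l))
          - min (Dp j) (Du j)) * (1 - q j) := by
  intro j
  have hgap : ∀ j', Dp j' - Du j ≤
      univ.sup' univ_nonempty (fun l => max (Dp l) (Du l)) - min (Dp j) (Du j) := fun j' =>
    sub_le_sub (le_sup'_of_le _ (mem_univ j') (le_max_left _ _)) (min_le_right _ _)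
  have hq_nonneg : ∀ j', 0 ≤ q j' := fun j' =>
    (hq01 j').elim (fun h => h.ge) (fun h => h ▸ zero_le_one)
  calc ∑ j' ∈ univ.filter (fun j' => j' ≠ j), (Dp j' - Du j) * q j'
      ≤ (univ.sup' univ_nonempty (fun l => max (Dp l) (Du l)) - min (Dp j) (Du j)) *
          ∑ j' ∈ univ.filter (fun j' => j' ≠ j), q j' :=
        sum_mul_le_mul_sum_of_le (fun j' _ => hgap j') (fun j' _ => hq_nonneg j')
    _ = _ := by rw [sum_filter_ne_eq_sub, hq1]

theorem stmt_7 {J : Type*} [Fintype J] [DecidableEq J] [Nonempty J]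
    (Dp Du : J → ℝ) (hD : ∀ j, Du j ≤ Dp j)
    (q : J → ℝ) (hq01 : ∀ j, q j = 0 ∨ q j = 1) (hq1 : ∑ j, q j = 1) :
    ∀ j, ∑ j' ∈ Finset.univ.filter (fun j' => j' ≠ j), (Dp j' - Du j) * q j'
      ≤ (Finset.univ.sup' Finset.univ_nonempty (fun l => max (Dp l) (Du l))
          - min (Dp j) (Du j)) * (1 - q j) :=
  stmt_7_general Dp Du q hq01 hq1
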